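/- arXiv:2303.02294 — 4 statements merged into one kernel-verified Lean document; each statement's English description precedes it below -/
import Mathlib

section
/- Let A, A' be convex bodies in ℝⁿ with A ⊆ A'. For ε ≥ 0 define T_A(ε) as the infimum of all μ ≥ 0 such that (A ⊖ εB) + μB ⊇ A, where B is the closed unit ball, ⊖ denotes Minkowski erosion (inner parallel body) and + Minkowski sum. Then T_{A'}(ε) ≤ T_A(ε) + d_H(A, A'), where d_H is the Hausdorff distance. -/
/-!
Every point of `A'` is within `d_H(A, A')` of `A`, every point of `A` is within (almost) `T_A(ε)` of
`A ⊖ εB`, and `A ⊖ εB ⊆ A' ⊖ εB`; the triangle inequality adds the two distances.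
-/

/-- Inner parallel body (Minkowski erosion by the ball of radius `ε`):
`A ⊖ εB = {x : x + εB ⊆ A} = {x : closedBall x ε ⊆ A}`. -/
def innerParallel {n : ℕ} (A : Set (EuclideanSpace ℝ (Fin n))) (ε : ℝ) :
    Set (EuclideanSpace ℝ (Fin n)) :=
  {x | Metric.closedBall x ε ⊆ A}

/-- Minkowski dilation of a set by the ball of radius `μ`. -/
def dilation {n : ℕ} (A : Set (EuclideanSpace ℝ (Fin n))) (μ : ℝ) :
    Set (EuclideanSpace ℝ (Fin n)) :=
  {x | ∃ y ∈ A, dist x y ≤ μ}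

/-- `T_A(ε)`: the least `μ ≥ 0` with `(A ⊖ εB) + μB ⊇ A`. -/
noncomputable def TErosion {n : ℕ} (A : Set (EuclideanSpace ℝ (Fin n))) (ε : ℝ) : ℝ :=
  sInf {μ : ℝ | 0 ≤ μ ∧ A ⊆ dilation (innerParallel A ε) μ}

open Metric

theorem Metric.exists_mem_dist_le_hausdorffDist {α : Type*} [PseudoMetricSpace α] {A B : Set α}
    {x : α} (hA : IsCompact A) (hAne : A.Nonempty) (hB : Bornology.IsBounded B) (hx : x ∈ B) :
    ∃ y ∈ A, dist x y ≤ hausdorffDist A B := by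
  obtain ⟨y, hyA, hy⟩ := hA.exists_infDist_eq_dist hAne x
  refine ⟨y, hyA, hy ▸ ?_⟩
  rw [hausdorffDist_comm]
  exact infDist_le_hausdorffDist_of_mem hx <|
    hausdorffEDist_ne_top_of_nonempty_of_bounded ⟨x, hx⟩ hAne hB hA.isBounded

section Erosion

variable {n : ℕ} {A A' C D : Set (EuclideanSpace ℝ (Fin n))} {ε μ ν : ℝ}

theorem innerParallel_mono (h : A ⊆ A') : innerParallel A ε ⊆ innerParallel A' ε :=
  fun _ hx => hx.trans h

theorem Set.Nonempty.of_innerParallel (hε : 0 ≤ ε) (h : (innerParallel A ε).Nonempty) :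
    A.Nonempty :=
  let ⟨x, hx⟩ := h
  ⟨x, hx (mem_closedBall_self hε)⟩

theorem dilation_mono (h : C ⊆ D) : dilation C μ ⊆ dilation D μ :=
  fun _ ⟨y, hy, hxy⟩ => ⟨y, h hy, hxy⟩

theorem dilation_dilation_subset : dilation (dilation C μ) ν ⊆ dilation C (μ + ν) := by
  rintro x ⟨y, ⟨z, hz, hyz⟩, hxy⟩
  exact ⟨z, hz, (dist_triangle x y z).trans (by linarith)⟩

theorem subset_dilation_hausdorffDist (hA : IsCompact A) (hAne : A.Nonempty)
    (hA' : Bornology.IsBounded A') : A' ⊆ dilation A (hausdorffDist A A') :=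
  fun _ hx => exists_mem_dist_le_hausdorffDist hA hAne hA' hx

theorem exists_subset_dilation (hA : Bornology.IsBounded A) (hC : C.Nonempty) :
    ∃ μ, 0 ≤ μ ∧ A ⊆ dilation C μ := by
  obtain ⟨c, hc⟩ := hC
  obtain ⟨R, hR⟩ := hA.subset_closedBall c
  exact ⟨max R 0, le_max_right _ _, fun x hx => ⟨c, hc, (hR hx).trans (le_max_left _ _)⟩⟩

theorem TErosion_le (hμ : 0 ≤ μ) (h : A ⊆ dilation (innerParallel A ε) μ) :
    TErosion A ε ≤ μ :=
  csInf_le ⟨0, fun _ hν => hν.1⟩ ⟨hμ, h⟩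

theorem le_TErosion {c : ℝ} (hA : Bornology.IsBounded A) (hne : (innerParallel A ε).Nonempty)
    (h : ∀ μ, 0 ≤ μ → A ⊆ dilation (innerParallel A ε) μ → c ≤ μ) : c ≤ TErosion A ε :=
  le_csInf (exists_subset_dilation hA hne) fun μ hμ => h μ hμ.1 hμ.2

end Erosion

theorem stmt_2_general {n : ℕ} (A A' : Set (EuclideanSpace ℝ (Fin n)))
    (hAc : IsCompact A)
    (hA'c : IsCompact A')
    (hsub : A ⊆ A') (ε : ℝ) (hε : 0 ≤ ε)
    (hne : (innerParallel A ε).Nonempty) :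
    TErosion A' ε ≤ TErosion A ε + Metric.hausdorffDist A A' := by
  rw [← sub_le_iff_le_add]
  refine le_TErosion hAc.isBounded hne fun μ hμ hAμ => sub_le_iff_le_add.2 ?_
  refine TErosion_le (add_nonneg hμ hausdorffDist_nonneg) ?_
  calc A' ⊆ dilation A (hausdorffDist A A') :=
        subset_dilation_hausdorffDist hAc (hne.of_innerParallel hε) hA'c.isBounded
    _ ⊆ dilation (dilation (innerParallel A ε) μ) (hausdorffDist A A') := dilation_mono hAμ
    _ ⊆ dilation (innerParallel A ε) (μ + hausdorffDist A A') := dilation_dilation_subset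
    _ ⊆ dilation (innerParallel A' ε) (μ + hausdorffDist A A') :=
        dilation_mono (innerParallel_mono hsub)

theorem stmt_2 {n : ℕ} (A A' : Set (EuclideanSpace ℝ (Fin n)))
    (hAc : IsCompact A) (hAconv : Convex ℝ A) (hAint : (interior A).Nonempty)
    (hA'c : IsCompact A') (hA'conv : Convex ℝ A') (hA'int : (interior A').Nonempty)
    (hsub : A ⊆ A') (ε : ℝ) (hε : 0 ≤ ε)
    (hne : (innerParallel A ε).Nonempty) :
    TErosion A' ε ≤ TErosion A ε + Metric.hausdorffDist A A' :=
  stmt_2_general A A' hAc hA'c hsub ε hε hne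
end

section
/- A strictly convex body in ℝⁿ has a unique inscribed ball: if two closed balls of radius r(K) (the inradius) are contained in K, they coincide. -/
/-!
If two distinct balls of radius `r` lie in a strictly convex body `K`, the ball of radius `r`
around the midpoint of their centres consists of midpoints of pairs of distinct points of `K`
(translate both balls by the same vector), so it lies in the interior of `K`. By compactness it
can then be enlarged inside `K`, so `r` is not the inradius.
-/

/-- The inradius of a set: the supremum of radii of closed balls contained in it. -/
noncomputable def inradius {n : ℕ} (K : Set (EuclideanSpace ℝ (Fin n))) : ℝ :=
  sSup {r : ℝ | ∃ c, Metric.closedBall c r ⊆ K}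

open Metric

section NormedSpace

variable {E : Type*} [NormedAddCommGroup E] [NormedSpace ℝ E] {K : Set E}

lemma bddAbove_radii_of_isBounded [Nontrivial E] (hK : Bornology.IsBounded K) :
    BddAbove {r : ℝ | ∃ c, closedBall c r ⊆ K} := by
  refine ⟨diam K, ?_⟩
  rintro r ⟨c, hc⟩
  rcases lt_or_ge r 0 with hr | hr
  · exact hr.le.trans diam_nonneg
  · calc r ≤ 2 * r := by linarith
      _ = diam (closedBall c r) := (diam_closedBall_eq c hr).symm
      _ ≤ diam K := diam_mono hc hK

lemma StrictConvex.closedBall_midpoint_subset_interior (hK : StrictConvex ℝ K) {c₁ c₂ : E}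
    {r : ℝ} (h₁ : closedBall c₁ r ⊆ K) (h₂ : closedBall c₂ r ⊆ K) (hne : c₁ ≠ c₂) :
    closedBall (midpoint ℝ c₁ c₂) r ⊆ interior K := by
  intro x hx
  set v := x - midpoint ℝ c₁ c₂
  have hv : ‖v‖ ≤ r := mem_closedBall_iff_norm.1 hx
  have hx_eq : x = (1 / 2 : ℝ) • (c₁ + v) + (1 / 2 : ℝ) • (c₂ + v) := by
    simp only [v, midpoint_eq_smul_add, invOf_eq_inv]
    module
  rw [hx_eq]
  exact hK (h₁ (by simpa [mem_closedBall_iff_norm] using hv))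
    (h₂ (by simpa [mem_closedBall_iff_norm] using hv)) (by simpa using hne)
    (by norm_num) (by norm_num) (by norm_num)

lemma exists_pos_closedBall_add_subset_of_closedBall_subset_interior [ProperSpace E] {c : E}
    {r : ℝ} (hr : 0 ≤ r) (h : closedBall c r ⊆ interior K) :
    ∃ δ > 0, closedBall c (δ + r) ⊆ K := by
  obtain ⟨δ, hδ, hsub⟩ :=
    (isCompact_closedBall c r).exists_cthickening_subset_open isOpen_interior h
  refine ⟨δ, hδ, ?_⟩
  rw [← cthickening_closedBall hδ.le hr]
  exact hsub.trans interior_subset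

end NormedSpace

theorem stmt_6_general {n : ℕ} (K : Set (EuclideanSpace ℝ (Fin n)))
    (hKc : IsCompact K)
    (hstrict : ∀ x ∈ K, ∀ y ∈ K, x ≠ y → ∀ t : ℝ, t ∈ Set.Ioo (0:ℝ) 1 →
      t • x + (1 - t) • y ∈ interior K)
    (c₁ c₂ : EuclideanSpace ℝ (Fin n))
    (h₁ : Metric.closedBall c₁ (inradius K) ⊆ K)
    (h₂ : Metric.closedBall c₂ (inradius K) ⊆ K) :
    Metric.closedBall c₁ (inradius K) = Metric.closedBall c₂ (inradius K) := by
  rcases subsingleton_or_nontrivial (EuclideanSpace ℝ (Fin n)) with hE | hE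
  · rw [Subsingleton.elim c₁ c₂]
  rcases lt_or_ge (inradius K) 0 with hneg | hnonneg
  · rw [closedBall_eq_empty.2 hneg, closedBall_eq_empty.2 hneg]
  obtain rfl | hne := eq_or_ne c₁ c₂
  · rfl
  have hK : StrictConvex ℝ K := fun x hx y hy hxy a b ha hb hab => by
    simpa [← eq_sub_of_add_eq' hab] using hstrict x hx y hy hxy a ⟨ha, by linarith⟩
  obtain ⟨δ, hδ, hball⟩ := exists_pos_closedBall_add_subset_of_closedBall_subset_interior hnonneg
    (hK.closedBall_midpoint_subset_interior h₁ h₂ hne)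
  have : δ + inradius K ≤ inradius K :=
    le_csSup (bddAbove_radii_of_isBounded hKc.isBounded) ⟨_, hball⟩
  linarith

theorem stmt_6 {n : ℕ} (K : Set (EuclideanSpace ℝ (Fin n)))
    (hKc : IsCompact K) (hKconv : Convex ℝ K) (hKint : (interior K).Nonempty)
    (hstrict : ∀ x ∈ K, ∀ y ∈ K, x ≠ y → ∀ t : ℝ, t ∈ Set.Ioo (0:ℝ) 1 →
      t • x + (1 - t) • y ∈ interior K)
    (c₁ c₂ : EuclideanSpace ℝ (Fin n))
    (h₁ : Metric.closedBall c₁ (inradius K) ⊆ K)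
    (h₂ : Metric.closedBall c₂ (inradius K) ⊆ K) :
    Metric.closedBall c₁ (inradius K) = Metric.closedBall c₂ (inradius K) :=
  stmt_6_general K hKc hstrict c₁ c₂ h₁ h₂
end

section
/- Let γ₁, …, γ_m ∈ [0, γ*] with γ* ∈ (0, π) and ∑ᵢ γᵢ = 2γ*. Then ∑ᵢ tan(γᵢ/2) ≤ 2 tan(γ*/2), with equality if and only if m of the γᵢ consist of exactly two values equal to γ* and the rest equal to 0. -/
/-! `x ↦ tan (x / 2)` is strictly convex on `[0, γ*]` and vanishes at `0`, so its graph lies below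
the chord from `0` to `γ*`: `tan (γᵢ / 2) ≤ (γᵢ / γ*) tan (γ* / 2)`, strictly unless
`γᵢ ∈ {0, γ*}`. Summing and using `∑ γᵢ = 2γ*` gives the inequality; in the equality case every
`γᵢ` is `0` or `γ*`, and the sum condition forces exactly two of them to be `γ*`. -/

open Real Set Finset

theorem strictConvexOn_tan : StrictConvexOn ℝ (Ico 0 (π / 2)) tan := by
  have hcos : ∀ x ∈ Ico 0 (π / 2), 0 < cos x := fun x hx =>
    cos_pos_of_mem_Ioo ⟨by linarith [hx.1, pi_div_two_pos], hx.2⟩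
  refine StrictMonoOn.strictConvexOn_of_deriv (convex_Ico _ _)
    (continuousOn_tan.mono fun x hx => (hcos x hx).ne') ?_
  rw [interior_Ico]
  intro x hx y hy hxy
  rw [deriv_tan, deriv_tan]
  have hcy := hcos y (Ioo_subset_Ico_self hy)
  have hcyx : cos y < cos x :=
    cos_lt_cos_of_nonneg_of_le_pi hx.1.le (by linarith [hy.2, pi_pos]) hxy
  exact one_div_lt_one_div_of_lt (by positivity) (by nlinarith)

theorem strictConvexOn_tan_div_two : StrictConvexOn ℝ (Ico 0 π) fun x => tan (x / 2) := by
  have hhalf : ∀ x ∈ Ico 0 π, x / 2 ∈ Ico 0 (π / 2) := fun x hx =>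
    ⟨by linarith [hx.1], by linarith [hx.2]⟩
  refine ⟨convex_Ico _ _, fun x hx y hy hxy a b ha hb hab => ?_⟩
  have h := strictConvexOn_tan.2 (hhalf x hx) (hhalf y hy) (by contrapose! hxy; linarith)
    ha hb hab
  simp only [smul_eq_mul] at h ⊢
  convert h using 2
  ring

section ChordFromZero

variable {f : ℝ → ℝ} {c x : ℝ}

theorem ConvexOn.le_div_mul_of_map_zero (hf : ConvexOn ℝ (Icc 0 c) f) (h0 : f 0 = 0)
    (hx : x ∈ Icc 0 c) : f x ≤ x / c * f c := by
  rcases hx.1.eq_or_lt with rfl | hx0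
  · simp [h0]
  have hc : 0 < c := hx0.trans_le hx.2
  have hslope := hf.secant_mono (left_mem_Icc.2 hc.le) hx (right_mem_Icc.2 hc.le) hx0.ne'
    hc.ne' hx.2
  simp only [h0, sub_zero] at hslope
  calc f x = x * (f x / x) := by field_simp
    _ ≤ x * (f c / c) := by gcongr
    _ = x / c * f c := by ring

theorem StrictConvexOn.lt_div_mul_of_map_zero (hf : StrictConvexOn ℝ (Icc 0 c) f)
    (h0 : f 0 = 0) (hx : x ∈ Ioo 0 c) : f x < x / c * f c := by
  have hc : 0 < c := hx.1.trans hx.2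
  have hslope := hf.secant_strict_mono (left_mem_Icc.2 hc.le) (Ioo_subset_Icc_self hx)
    (right_mem_Icc.2 hc.le) hx.1.ne' hc.ne' hx.2
  simp only [h0, sub_zero] at hslope
  calc f x = x * (f x / x) := by field_simp [hx.1.ne']
    _ < x * (f c / c) := by gcongr; exact hx.1
    _ = x / c * f c := by ring

theorem StrictConvexOn.map_eq_div_mul_iff_of_map_zero (hf : StrictConvexOn ℝ (Icc 0 c) f)
    (h0 : f 0 = 0) (hx : x ∈ Icc 0 c) : f x = x / c * f c ↔ x = 0 ∨ x = c := by
  refine ⟨fun h => ?_, ?_⟩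
  · by_contra! hne
    exact (hf.lt_div_mul_of_map_zero h0
      ⟨hx.1.lt_of_ne' hne.1, hx.2.lt_of_ne hne.2⟩).ne h
  · rintro (rfl | rfl)
    · simp [h0]
    · rcases eq_or_ne x 0 with rfl | hx0
      · simp [h0]
      · rw [div_self hx0, one_mul]

theorem StrictConvexOn.sum_map_le_and_eq_iff_of_map_zero {ι : Type*} {s : Finset ι}
    {y : ι → ℝ} (hf : StrictConvexOn ℝ (Icc 0 c) f) (h0 : f 0 = 0)
    (hy : ∀ i ∈ s, y i ∈ Icc 0 c) :
    ∑ i ∈ s, f (y i) ≤ (∑ i ∈ s, y i) / c * f c ∧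
      (∑ i ∈ s, f (y i) = (∑ i ∈ s, y i) / c * f c ↔ ∀ i ∈ s, y i = 0 ∨ y i = c) := by
  have hle : ∀ i ∈ s, f (y i) ≤ y i / c * f c := fun i hi =>
    hf.convexOn.le_div_mul_of_map_zero h0 (hy i hi)
  rw [Finset.sum_div, Finset.sum_mul]
  refine ⟨Finset.sum_le_sum hle, ?_⟩
  rw [Finset.sum_eq_sum_iff_of_le hle]
  exact forall₂_congr fun i hi => hf.map_eq_div_mul_iff_of_map_zero h0 (hy i hi)

end ChordFromZero

theorem forall_eq_zero_or_eq_iff_exists_pair {ι K : Type*} [Fintype ι] [Field K] [CharZero K]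
    {y : ι → K} {c : K} (hc : c ≠ 0) (hsum : ∑ i, y i = 2 * c) :
    (∀ i, y i = 0 ∨ y i = c) ↔
      ∃ i j : ι, i ≠ j ∧ y i = c ∧ y j = c ∧ ∀ k, k ≠ i → k ≠ j → y k = 0 := by
  classical
  constructor
  · intro hy
    have hite : ∀ i, y i = if y i = c then c else 0 := fun i => by
      rcases hy i with h | h <;> simp [h, hc.symm]
    rw [Finset.sum_congr rfl fun i _ => hite i, ← Finset.sum_filter, Finset.sum_const,
      nsmul_eq_mul] at hsum
    have hcard : (univ.filter fun i => y i = c).card = 2 := by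
      exact_mod_cast mul_right_cancel₀ hc hsum
    obtain ⟨i, j, hij, hpair⟩ := Finset.card_eq_two.1 hcard
    have hmem : ∀ k, y k = c ↔ k = i ∨ k = j := fun k => by
      simpa using congrArg (k ∈ ·) hpair
    refine ⟨i, j, hij, (hmem i).2 (Or.inl rfl), (hmem j).2 (Or.inr rfl), fun k hki hkj => ?_⟩
    exact (hy k).resolve_right fun h => ((hmem k).1 h).elim hki hkj
  · rintro ⟨i, j, -, hi, hj, hrest⟩ k
    by_cases hki : k = i
    · exact Or.inr (hki ▸ hi)
    by_cases hkj : k = j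
    · exact Or.inr (hkj ▸ hj)
    exact Or.inl (hrest k hki hkj)

theorem stmt_12 (m : ℕ) (γ : Fin m → ℝ) (γs : ℝ)
    (hγs : γs ∈ Set.Ioo 0 π)
    (hnonneg : ∀ i, 0 ≤ γ i) (hle : ∀ i, γ i ≤ γs)
    (hsum : ∑ i, γ i = 2 * γs) :
    (∑ i, Real.tan (γ i / 2)) ≤ 2 * Real.tan (γs / 2) ∧
    ((∑ i, Real.tan (γ i / 2)) = 2 * Real.tan (γs / 2) ↔
      ∃ i j : Fin m, i ≠ j ∧ γ i = γs ∧ γ j = γs ∧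
        ∀ k, k ≠ i → k ≠ j → γ k = 0) := by
  obtain ⟨hγs0, hγsπ⟩ := hγs
  have hf : StrictConvexOn ℝ (Icc 0 γs) fun x => tan (x / 2) :=
    strictConvexOn_tan_div_two.subset (Icc_subset_Ico_right hγsπ) (convex_Icc _ _)
  have hchord : (∑ i, γ i) / γs * tan (γs / 2) = 2 * tan (γs / 2) := by
    rw [hsum]
    field_simp
  obtain ⟨hineq, heq⟩ := hf.sum_map_le_and_eq_iff_of_map_zero (s := univ) (by simp)
    fun i _ => ⟨hnonneg i, hle i⟩
  rw [hchord] at hineq heq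
  refine ⟨hineq, heq.trans ?_⟩
  simpa using forall_eq_zero_or_eq_iff_exists_pair hγs0.ne' hsum
end

section
/- For h ∈ (0,1) fixed and n → ∞, the integral J(n) = ∫₀^{1−√(1−h²)} (1 − (x + √(1−h²))²)^{(n−3)/2} dx satisfies J(n) = (h^{n−1}/√(1−h²)) · n^{−1} · (1 + O(1/n)). In particular, lim_{n→∞} J(n) · n · h^{−(n−1)} = 1/√(1−h²). -/
/-!
After the shift `u = x + √(1 - h²)`, `J(n) = ∫_c^1 (1 - u²)^q du` with `c = √(1 - h²)` and
`q = (n - 3)/2`. On `[c, 1]` the integrand is squeezed between multiples of `u (1 - u²)^q` and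
`u (u² - c²)(1 - u²)^q`, both of which have elementary antiderivatives:
`c ≤ u` gives the upper bound `(1 - c²)^(q+1) / (2c(q+1))`, and
`1 - u/c + u(u² - c²)/(2c³) = (u - c)²(u + 2c)/(2c³) ≥ 0` gives a lower bound that differs from
it by `O((1 - c²)^(q+2) / q²)`. Since `1 - c² = h²` and `2(q + 1) = n - 1`, this gives
`J(n) = h^(n-1) / (c (n - 1)) + O(h^(n-1) / n²)`, and `1/(n - 1) - 1/n = O(1/n²)`.
-/

open Real Filter Asymptotics

/-- The lens-cap surface-area integral `J(n)`. -/
noncomputable def lensIntegral (h : ℝ) (n : ℕ) : ℝ :=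
  ∫ x in (0:ℝ)..(1 - Real.sqrt (1 - h ^ 2)),
    (1 - (x + Real.sqrt (1 - h ^ 2)) ^ 2) ^ (((n : ℝ) - 3) / 2)

lemma rpow_add_one_of_nonneg_exponent (x : ℝ) {y : ℝ} (hy : 0 ≤ y) :
    x ^ (y + 1) = x ^ y * x := by
  rcases eq_or_ne x 0 with rfl | hx
  · rw [zero_rpow (by linarith), mul_zero]
  · exact rpow_add_one hx y

section CapIntegral

variable {c q : ℝ}

lemma continuous_one_sub_sq_rpow (hq : 0 ≤ q) : Continuous fun u : ℝ => (1 - u ^ 2) ^ q :=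
  (continuous_const.sub (continuous_pow 2)).rpow_const fun _ => Or.inr hq

theorem integral_mul_one_sub_sq_rpow (c : ℝ) (hq : 0 ≤ q) :
    ∫ u in c..1, u * (1 - u ^ 2) ^ q = (1 - c ^ 2) ^ (q + 1) / (2 * (q + 1)) := by
  have hq1 : q + 1 ≠ 0 := by linarith
  have hderiv (u : ℝ) :
      HasDerivAt (fun u => -((1 - u ^ 2) ^ (q + 1) / (2 * (q + 1)))) (u * (1 - u ^ 2) ^ q) u := by
    have hbase : HasDerivAt (fun u : ℝ => 1 - u ^ 2) (-(2 * u)) u := by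
      simpa using (hasDerivAt_pow 2 u).const_sub 1
    refine (((hbase.rpow_const (p := q + 1) (Or.inr (by linarith))).div_const
      (2 * (q + 1))).neg).congr_deriv ?_
    rw [add_sub_cancel_right]
    field_simp
  rw [intervalIntegral.integral_eq_sub_of_hasDerivAt (fun u _ => hderiv u)
    ((continuous_id.mul (continuous_one_sub_sq_rpow hq)).intervalIntegrable _ _)]
  simp [zero_rpow hq1]

theorem integral_mul_sq_sub_sq_mul_one_sub_sq_rpow (c : ℝ) (hq : 0 ≤ q) :
    ∫ u in c..1, u * (u ^ 2 - c ^ 2) * (1 - u ^ 2) ^ q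
      = (1 - c ^ 2) ^ (q + 2) / (2 * (q + 1) * (q + 2)) := by
  have hq1 : 0 ≤ q + 1 := by linarith
  have hsplit (u : ℝ) : u * (u ^ 2 - c ^ 2) * (1 - u ^ 2) ^ q
      = (1 - c ^ 2) * (u * (1 - u ^ 2) ^ q) - u * (1 - u ^ 2) ^ (q + 1) := by
    rw [rpow_add_one_of_nonneg_exponent _ hq]; ring
  have hpow : (1 - c ^ 2) ^ (q + 2) = (1 - c ^ 2) ^ (q + 1) * (1 - c ^ 2) := by
    rw [← rpow_add_one_of_nonneg_exponent _ hq1]; ring_nf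
  simp_rw [hsplit]
  rw [intervalIntegral.integral_sub, intervalIntegral.integral_const_mul,
    integral_mul_one_sub_sq_rpow c hq, integral_mul_one_sub_sq_rpow c hq1,
    show q + 1 + 1 = q + 2 by ring, hpow]
  · field_simp; ring
  all_goals exact (Continuous.intervalIntegrable (by fun_prop) _ _)

lemma one_sub_sq_nonneg_of_mem_Icc {u : ℝ} (hc : 0 ≤ c) (hu : u ∈ Set.Icc c 1) :
    0 ≤ 1 - u ^ 2 := by
  nlinarith [hu.1, hu.2]

theorem integral_one_sub_sq_rpow_le (hc : 0 < c) (hc1 : c ≤ 1) (hq : 0 ≤ q) :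
    ∫ u in c..1, (1 - u ^ 2) ^ q ≤ (1 - c ^ 2) ^ (q + 1) / (2 * c * (q + 1)) := by
  calc ∫ u in c..1, (1 - u ^ 2) ^ q ≤ ∫ u in c..1, u * (1 - u ^ 2) ^ q / c := by
        refine intervalIntegral.integral_mono_on hc1
          ((continuous_one_sub_sq_rpow hq).intervalIntegrable _ _)
          (Continuous.intervalIntegrable (by fun_prop) _ _) fun u hu => ?_
        rw [le_div_iff₀ hc, mul_comm]
        exact mul_le_mul_of_nonneg_right hu.1
          (rpow_nonneg (one_sub_sq_nonneg_of_mem_Icc hc.le hu) q)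
    _ = _ := by
        rw [intervalIntegral.integral_div, integral_mul_one_sub_sq_rpow c hq]
        field_simp

theorem le_integral_one_sub_sq_rpow (hc : 0 < c) (hc1 : c ≤ 1) (hq : 0 ≤ q) :
    (1 - c ^ 2) ^ (q + 1) / (2 * c * (q + 1))
        - (1 - c ^ 2) ^ (q + 2) / (4 * c ^ 3 * (q + 1) * (q + 2))
      ≤ ∫ u in c..1, (1 - u ^ 2) ^ q := by
  calc _ = ∫ u in c..1, (u * (1 - u ^ 2) ^ q / c
          - u * (u ^ 2 - c ^ 2) * (1 - u ^ 2) ^ q / (2 * c ^ 3)) := by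
        rw [intervalIntegral.integral_sub, intervalIntegral.integral_div,
          intervalIntegral.integral_div, integral_mul_one_sub_sq_rpow c hq,
          integral_mul_sq_sub_sq_mul_one_sub_sq_rpow c hq]
        · field_simp; ring
        all_goals exact (Continuous.intervalIntegrable (by fun_prop) _ _)
    _ ≤ _ := by
        refine intervalIntegral.integral_mono_on hc1
          (Continuous.intervalIntegrable (by fun_prop) _ _)
          ((continuous_one_sub_sq_rpow hq).intervalIntegrable _ _) fun u hu => ?_
        have hw := rpow_nonneg (one_sub_sq_nonneg_of_mem_Icc hc.le hu) q
        have hgap : (1 - u ^ 2) ^ q - (u * (1 - u ^ 2) ^ q / c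
            - u * (u ^ 2 - c ^ 2) * (1 - u ^ 2) ^ q / (2 * c ^ 3))
            = (u - c) ^ 2 * (u + 2 * c) / (2 * c ^ 3) * (1 - u ^ 2) ^ q := by
          field_simp; ring
        have : 0 ≤ (u - c) ^ 2 * (u + 2 * c) / (2 * c ^ 3) * (1 - u ^ 2) ^ q :=
          mul_nonneg (div_nonneg (mul_nonneg (sq_nonneg _) (by linarith [hu.1]))
            (by positivity)) hw
        linarith

theorem abs_integral_one_sub_sq_rpow_sub_le (hc : 0 < c) (hc1 : c ≤ 1) (hq : 0 ≤ q) :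
    |(∫ u in c..1, (1 - u ^ 2) ^ q) - (1 - c ^ 2) ^ (q + 1) / (2 * c * (q + 1))|
      ≤ (1 - c ^ 2) ^ (q + 2) / (4 * c ^ 3 * (q + 1) * (q + 2)) := by
  have hE : 0 ≤ (1 - c ^ 2) ^ (q + 2) / (4 * c ^ 3 * (q + 1) * (q + 2)) := by
    have : 0 ≤ 1 - c ^ 2 := by nlinarith
    have : 0 < q + 1 := by linarith
    positivity
  rw [abs_le]
  constructor <;>
    linarith [integral_one_sub_sq_rpow_le hc hc1 hq, le_integral_one_sub_sq_rpow hc hc1 hq]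

end CapIntegral

lemma abs_sub_div_le_of_abs_sub_div_sub_one_le {J B t N : ℝ} (hB : 0 ≤ B) (ht : 0 ≤ t)
    (hN : 2 ≤ N) (hJ : |J - B / (N - 1)| ≤ t * B / ((N - 1) * (N + 1))) :
    |J - B / N| ≤ 2 * (1 + t) * (B / N / N) := by
  have hN1 : 0 < N - 1 := by linarith
  have hN2 : 0 < N ^ 2 - 1 := by nlinarith
  have hgap : B / (N - 1) - B / N = B / N / N * (N / (N - 1)) := by
    field_simp; ring
  have hgap_ratio : N / (N - 1) ≤ 2 := by
    rw [div_le_iff₀ hN1]; linarith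
  have htail : t * B / ((N - 1) * (N + 1))
      = 2 * t * (B / N / N) * (N ^ 2 / (2 * (N ^ 2 - 1))) := by
    field_simp; ring
  have htail_ratio : N ^ 2 / (2 * (N ^ 2 - 1)) ≤ 1 := by
    rw [div_le_one (by positivity)]; nlinarith
  have hBN : 0 ≤ B / N / N := by positivity
  have hgap_le := mul_le_mul_of_nonneg_left hgap_ratio hBN
  have htail_le := mul_le_mul_of_nonneg_left htail_ratio (by positivity : 0 ≤ 2 * t * (B / N / N))
  have hgap_nonneg : 0 ≤ B / N / N * (N / (N - 1)) := by positivity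
  rw [htail, abs_le] at hJ
  rw [abs_le]
  constructor <;> nlinarith

lemma lensIntegral_eq_integral_one_sub_sq_rpow (h : ℝ) (n : ℕ) :
    lensIntegral h n = ∫ u in √(1 - h ^ 2)..1, (1 - u ^ 2) ^ (((n : ℝ) - 3) / 2) := by
  rw [lensIntegral, intervalIntegral.integral_comp_add_right (fun u => (1 - u ^ 2) ^ _),
    zero_add, sub_add_cancel]

lemma sq_rpow_div_two {x : ℝ} (hx : 0 ≤ x) (y : ℝ) : (x ^ 2) ^ (y / 2) = x ^ y := by
  rw [rpow_div_two_eq_sqrt _ (sq_nonneg x), sqrt_sq hx]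

theorem abs_lensIntegral_sub_le {h : ℝ} (h0 : 0 < h) (h1 : h < 1) {n : ℕ} (hn : 3 ≤ n) :
    |lensIntegral h n - h ^ ((n : ℝ) - 1) / √(1 - h ^ 2) / n|
      ≤ 2 / (1 - h ^ 2) * (h ^ ((n : ℝ) - 1) / √(1 - h ^ 2) / n / n) := by
  have hN : (3 : ℝ) ≤ n := by exact_mod_cast hn
  set c := √(1 - h ^ 2)
  have hc2 : c ^ 2 = 1 - h ^ 2 := sq_sqrt (by nlinarith)
  have hc0 : 0 < c := sqrt_pos.2 (by nlinarith)
  set N : ℝ := (n : ℝ)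
  set A := h ^ (N - 1) with hA_def
  have hAh : h ^ (N + 1) = A * h ^ 2 := by
    rw [show N + 1 = N - 1 + 2 by ring, rpow_add h0, rpow_two]
  have key := abs_integral_one_sub_sq_rpow_sub_le hc0 (by nlinarith) (q := (N - 3) / 2)
    (by linarith)
  rw [← lensIntegral_eq_integral_one_sub_sq_rpow, hc2, sub_sub_cancel,
    show (N - 3) / 2 + 1 = (N - 1) / 2 by ring, show (N - 3) / 2 + 2 = (N + 1) / 2 by ring,
    sq_rpow_div_two h0.le, sq_rpow_div_two h0.le, hAh, ← hA_def,
    show A / (2 * c * ((N - 1) / 2)) = A / c / (N - 1) by field_simp,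
    show A * h ^ 2 / (4 * c ^ 3 * ((N - 1) / 2) * ((N + 1) / 2))
      = h ^ 2 / c ^ 2 * (A / c) / ((N - 1) * (N + 1)) by field_simp; ring] at key
  rw [show 2 / (1 - h ^ 2) = 2 * (1 + h ^ 2 / c ^ 2) by rw [← hc2]; field_simp; linarith]
  exact abs_sub_div_le_of_abs_sub_div_sub_one_le (by positivity) (by positivity) (by linarith) key

theorem abs_lensIntegral_mul_div_sub_le {h : ℝ} (h0 : 0 < h) (h1 : h < 1) {n : ℕ}
    (hn : 3 ≤ n) :
    |lensIntegral h n * n / h ^ ((n : ℝ) - 1) - 1 / √(1 - h ^ 2)|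
      ≤ 2 / (1 - h ^ 2) / √(1 - h ^ 2) / n := by
  have hA : 0 < h ^ ((n : ℝ) - 1) := rpow_pos_of_pos h0 _
  have hn0 : (0 : ℝ) < n := by positivity
  have hc0 : 0 < √(1 - h ^ 2) := sqrt_pos.2 (by nlinarith)
  calc |lensIntegral h n * n / h ^ ((n : ℝ) - 1) - 1 / √(1 - h ^ 2)|
      = |lensIntegral h n - h ^ ((n : ℝ) - 1) / √(1 - h ^ 2) / n|
          * (n / h ^ ((n : ℝ) - 1)) := by
        rw [← abs_of_pos (div_pos hn0 hA), ← abs_mul]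
        congr 1
        field_simp
    _ ≤ 2 / (1 - h ^ 2) * (h ^ ((n : ℝ) - 1) / √(1 - h ^ 2) / n / n)
          * (n / h ^ ((n : ℝ) - 1)) :=
        mul_le_mul_of_nonneg_right (abs_lensIntegral_sub_le h0 h1 hn) (by positivity)
    _ = 2 / (1 - h ^ 2) / √(1 - h ^ 2) / n := by
        field_simp

theorem stmt_18 (h : ℝ) (hh : h ∈ Set.Ioo (0:ℝ) 1) :
    (fun n : ℕ => lensIntegral h n
        - h ^ ((n : ℝ) - 1) / Real.sqrt (1 - h ^ 2) / n)
      =O[atTop] (fun n : ℕ => h ^ ((n : ℝ) - 1) / Real.sqrt (1 - h ^ 2) / n / n) ∧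
    Tendsto (fun n : ℕ => lensIntegral h n * n / h ^ ((n : ℝ) - 1))
      atTop (nhds (1 / Real.sqrt (1 - h ^ 2))) := by
  obtain ⟨h0, h1⟩ := hh
  constructor
  · refine IsBigO.of_bound (2 / (1 - h ^ 2)) ?_
    filter_upwards [eventually_ge_atTop 3] with n hn
    have hg : 0 ≤ h ^ ((n : ℝ) - 1) / √(1 - h ^ 2) / n / n := by positivity
    simpa only [norm_eq_abs, abs_of_nonneg hg] using abs_lensIntegral_sub_le h0 h1 hn
  · rw [← tendsto_sub_nhds_zero_iff]
    refine squeeze_zero_norm' ?_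
      (tendsto_const_div_atTop_nhds_zero_nat (2 / (1 - h ^ 2) / √(1 - h ^ 2)))
    filter_upwards [eventually_ge_atTop 3] with n hn
    exact abs_lensIntegral_mul_div_sub_le h0 h1 hn
end
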